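/- Let d ≥ 2, let a be a symmetric positive semidefinite d×d real matrix and H a symmetric positive semidefinite d×d real matrix. Then trace(aH) ≥ d (det a)^{1/d} (det H)^{1/d}. -/

import Mathlib

/-!
Conjugating by `√a` turns `aH` into the positive semidefinite matrix `√a H √a`, which has the same
trace as `aH` and determinant `det a · det H`. For a positive semidefinite matrix, AM–GM applied to
its eigenvalues gives `d · det ^ (1/d) ≤ trace`.
-/

open Finset
open scoped MatrixOrder

namespace Matrix

variable {n : Type*} [Fintype n] [DecidableEq n]

theorem PosSemidef.card_mul_det_rpow_le_trace {M : Matrix n n ℝ} (hM : M.PosSemidef) :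
    (Fintype.card n : ℝ) * M.det ^ ((1 : ℝ) / Fintype.card n) ≤ M.trace := by
  rcases isEmpty_or_nonempty n with hn | hn
  · simp
  set N : ℝ := (Fintype.card n : ℝ)
  have hN : 0 < N := Nat.cast_pos.mpr Fintype.card_pos
  set μ := hM.isHermitian.eigenvalues
  have hμ : ∀ i, 0 ≤ μ i := hM.eigenvalues_nonneg
  have amgm : ∏ i, μ i ^ (1 / N) ≤ ∑ i, 1 / N * μ i :=
    Real.geom_mean_le_arith_mean_weighted univ _ μ (fun _ _ ↦ by positivity)
      (by simp [N, card_univ]) (fun i _ ↦ hμ i)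
  have hdet : M.det = ∏ i, μ i := by simpa using hM.isHermitian.det_eq_prod_eigenvalues
  have htrace : M.trace = N * ∑ i, 1 / N * μ i := by
    rw [← mul_sum, ← mul_assoc, mul_one_div_cancel hN.ne', one_mul]
    simpa using hM.isHermitian.trace_eq_sum_eigenvalues
  rw [hdet, ← Real.finsetProd_rpow _ _ (fun i _ ↦ hμ i), htrace]
  gcongr

theorem PosSemidef.card_mul_det_rpow_mul_det_rpow_le_trace_mul {A B : Matrix n n ℝ}
    (hA : A.PosSemidef) (hB : B.PosSemidef) :
    (Fintype.card n : ℝ) * A.det ^ ((1 : ℝ) / Fintype.card n) * B.det ^ ((1 : ℝ) / Fintype.card n)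
      ≤ (A * B).trace := by
  set S := CFC.sqrt A
  have hSS : S * S = A := CFC.sqrt_mul_sqrt_self A hA.nonneg
  have hS : Sᴴ = S := (nonneg_iff_posSemidef.mp (CFC.sqrt_nonneg A)).isHermitian
  have hconj : (S * B * S).PosSemidef := by
    simpa only [hS] using hB.mul_mul_conjTranspose_same S
  have htrace : (S * B * S).trace = (A * B).trace := by rw [trace_mul_cycle, hSS]
  have hdet : (S * B * S).det = A.det * B.det := by
    rw [← hSS, det_mul, det_mul, det_mul]
    ring
  have := hconj.card_mul_det_rpow_le_trace
  rwa [htrace, hdet, Real.mul_rpow hA.det_nonneg hB.det_nonneg, ← mul_assoc] at this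

end Matrix

theorem stmt_8_general (d : ℕ) (a H : Matrix (Fin d) (Fin d) ℝ)
    (ha : a.PosSemidef) (hH : H.PosSemidef) :
    (d : ℝ) * a.det ^ ((1 : ℝ) / d) * H.det ^ ((1 : ℝ) / d) ≤ (a * H).trace := by
  simpa using ha.card_mul_det_rpow_mul_det_rpow_le_trace_mul hH

theorem stmt_8 (d : ℕ) (hd : 2 ≤ d) (a H : Matrix (Fin d) (Fin d) ℝ)
    (ha : a.PosSemidef) (hH : H.PosSemidef) :
    (d : ℝ) * a.det ^ ((1 : ℝ) / d) * H.det ^ ((1 : ℝ) / d) ≤ (a * H).trace :=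
  stmt_8_general d a H ha hH
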